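/- Let X and Y be independent random variables with Weibull densities f(x;α_S,β,γ) and f(y;α_A,β,γ) respectively, sharing the same location β and shape γ > 0. Then P(X > Y) = α_S^γ / (α_S^γ + α_A^γ). -/

import Mathlib

open MeasureTheory ProbabilityTheory Real

noncomputable def weibullPDF (α β γ x : ℝ) : ℝ :=
  if β ≤ x then (γ / α) * ((x - β) / α) ^ (γ - 1) * Real.exp (-((x - β) / α) ^ γ) else 0

/-!
Write the Weibull law with rate `c = α ^ (-γ)`. Its density
`c γ (x - β) ^ (γ - 1) e^{-c (x - β) ^ γ}` is the derivative of `-e^{-c (x - β) ^ γ}`,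
so its tail is `μ (Ioi a) = e^{-c (a - β) ^ γ}` for `a ≥ β`. By independence,
`P(X > Y) = ∫ P(X > y) dμ_Y(y)`, and the density of rate `c_A` times the tail of rate `c_S` is
`c_A / (c_A + c_S)` times the density of rate `c_A + c_S`, which integrates to `1`.
Hence `P(X > Y) = c_A / (c_A + c_S) = α_S ^ γ / (α_S ^ γ + α_A ^ γ)`.
-/

open Set Filter Topology

lemma measure_lt_eq_lintegral_map_Ioi {Ω E : Type*} [MeasurableSpace Ω] {μ : Measure Ω}
    [LinearOrder E] [TopologicalSpace E] [OrderClosedTopology E] [SecondCountableTopology E]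
    [MeasurableSpace E] [OpensMeasurableSpace E] {X Y : Ω → E} (hX : Measurable X) (hY : Measurable Y) [SigmaFinite (μ.map X)]
    [SigmaFinite (μ.map Y)] (hind : IndepFun X Y μ) :
    μ {ω | Y ω < X ω} = ∫⁻ y, μ.map X (Ioi y) ∂μ.map Y := by
  have hmap : μ.map (fun ω => (Y ω, X ω)) = (μ.map Y).prod (μ.map X) :=
    (indepFun_iff_map_prod_eq_prod_map_map' hY.aemeasurable hX.aemeasurable ‹_› ‹_›).1
      hind.symm
  have hs : MeasurableSet {p : E × E | p.1 < p.2} :=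
    measurableSet_lt measurable_fst measurable_snd
  calc μ {ω | Y ω < X ω} = μ.map (fun ω => (Y ω, X ω)) {p | p.1 < p.2} :=
        (Measure.map_apply (hY.prodMk hX) hs).symm
    _ = ∫⁻ y, μ.map X (Ioi y) ∂μ.map Y := by rw [hmap, Measure.prod_apply hs]; rfl

section RateForm

variable {c β γ : ℝ}

lemma hasDerivAt_neg_exp_neg_mul_sub_rpow {x : ℝ} (hx : β < x) :
    HasDerivAt (fun t => -exp (-(c * (t - β) ^ γ)))
      (c * γ * (x - β) ^ (γ - 1) * exp (-(c * (x - β) ^ γ))) x := by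
  have hpow : HasDerivAt (fun t => (t - β) ^ γ) (γ * (x - β) ^ (γ - 1)) x := by
    simpa using ((hasDerivAt_id x).sub_const β).rpow_const (p := γ) (Or.inl (sub_pos.2 hx).ne')
  exact ((hpow.const_mul c).fun_neg.exp).fun_neg.congr_deriv (by ring)

lemma lintegral_Ioi_weibull_rate_density (hc : 0 < c) (hγ : 0 < γ) {a : ℝ} (ha : β ≤ a) :
    ∫⁻ x in Ioi a, ENNReal.ofReal (c * γ * (x - β) ^ (γ - 1) * exp (-(c * (x - β) ^ γ)))
      = ENNReal.ofReal (exp (-(c * (a - β) ^ γ))) := by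
  have hcont : ContinuousWithinAt (fun t => -exp (-(c * (t - β) ^ γ))) (Ici a) a := by
    have := continuous_rpow_const hγ.le
    fun_prop
  have hderiv : ∀ x ∈ Ioi a, HasDerivAt (fun t => -exp (-(c * (t - β) ^ γ)))
      (c * γ * (x - β) ^ (γ - 1) * exp (-(c * (x - β) ^ γ))) x :=
    fun x hx => hasDerivAt_neg_exp_neg_mul_sub_rpow (ha.trans_lt hx)
  have hnonneg : ∀ x ∈ Ioi a, 0 ≤ c * γ * (x - β) ^ (γ - 1) * exp (-(c * (x - β) ^ γ)) :=
    fun x hx => by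
      have := rpow_nonneg (sub_nonneg.2 (ha.trans hx.out.le)) (γ - 1)
      positivity
  have hlim : Tendsto (fun t => -exp (-(c * (t - β) ^ γ))) atTop (𝓝 0) := by
    have hshift : Tendsto (fun t => t - β) atTop atTop :=
      tendsto_atTop_add_const_right atTop (-β) tendsto_id
    have hpow := ((tendsto_rpow_atTop hγ).comp hshift).const_mul_atTop hc
    simpa using (tendsto_exp_atBot.comp (tendsto_neg_atTop_atBot.comp hpow)).neg
  rw [← ofReal_integral_eq_lintegral_ofReal
      (integrableOn_Ioi_deriv_of_nonneg hcont hderiv hnonneg hlim)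
      ((ae_restrict_iff' measurableSet_Ioi).2 (.of_forall hnonneg)),
    integral_Ioi_of_hasDerivAt_of_nonneg hcont hderiv hnonneg hlim, zero_sub, neg_neg]

end RateForm

lemma weibull_rate_density_mul_exp {c d γ u : ℝ} (hcd : c + d ≠ 0) :
    c * γ * u ^ (γ - 1) * exp (-(c * u ^ γ)) * exp (-(d * u ^ γ))
      = c / (c + d) * ((c + d) * γ * u ^ (γ - 1) * exp (-((c + d) * u ^ γ))) := by
  rw [mul_assoc _ (exp _), ← exp_add, ← neg_add, ← add_mul]
  field_simp

section Weibull

variable {α β γ : ℝ}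

lemma weibullPDF_of_lt {x : ℝ} (hx : x < β) : weibullPDF α β γ x = 0 :=
  if_neg hx.not_ge

lemma weibullPDF_eq_rate_form (hα : 0 < α) {x : ℝ} (hx : β < x) :
    weibullPDF α β γ x
      = α ^ (-γ) * γ * (x - β) ^ (γ - 1) * exp (-(α ^ (-γ) * (x - β) ^ γ)) := by
  have hxβ : 0 ≤ x - β := (sub_pos.2 hx).le
  rw [weibullPDF, if_pos hx.le, div_rpow hxβ hα.le, div_rpow hxβ hα.le, rpow_sub_one hα.ne',
    rpow_neg hα.le]
  field_simp

lemma measurable_weibullPDF : Measurable (weibullPDF α β γ) :=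
  Measurable.ite measurableSet_Ici (by fun_prop) measurable_const

variable (α β γ) in
noncomputable def weibullMeasure : Measure ℝ :=
  volume.withDensity fun x => ENNReal.ofReal (weibullPDF α β γ x)

instance : SigmaFinite (weibullMeasure α β γ) :=
  SigmaFinite.withDensity_of_ne_top' fun _ => ENNReal.ofReal_ne_top

lemma weibullMeasure_Ioi (hα : 0 < α) (hγ : 0 < γ) {a : ℝ} (ha : β ≤ a) :
    weibullMeasure α β γ (Ioi a) = ENNReal.ofReal (exp (-(α ^ (-γ) * (a - β) ^ γ))) := by
  rw [weibullMeasure, withDensity_apply _ measurableSet_Ioi,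
    ← lintegral_Ioi_weibull_rate_density (rpow_pos_of_pos hα _) hγ ha]
  exact setLIntegral_congr_fun measurableSet_Ioi fun x hx =>
    by rw [weibullPDF_eq_rate_form hα (ha.trans_lt hx)]

lemma lintegral_weibullMeasure_Ioi {αS αA : ℝ} (hαS : 0 < αS) (hαA : 0 < αA)
    (hγ : 0 < γ) :
    ∫⁻ y, weibullMeasure αS β γ (Ioi y) ∂weibullMeasure αA β γ
      = ENNReal.ofReal (αS ^ γ / (αS ^ γ + αA ^ γ)) := by
  set cS := αS ^ (-γ)
  set cA := αA ^ (-γ)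
  have hcS : 0 < cS := rpow_pos_of_pos hαS _
  have hcA : 0 < cA := rpow_pos_of_pos hαA _
  have htail : Measurable fun y => weibullMeasure αS β γ (Ioi y) :=
    Antitone.measurable fun _ _ h => measure_mono (Ioi_subset_Ioi h)
  have hsupp : (fun y => ENNReal.ofReal (weibullPDF αA β γ y) *
      weibullMeasure αS β γ (Ioi y)).support ⊆ Ici β :=
    Function.support_subset_iff'.2 fun y hy => by
      rw [weibullPDF_of_lt (not_le.1 hy), ENNReal.ofReal_zero, zero_mul]
  have hmix : ∀ y ∈ Ioi β,
      ENNReal.ofReal (weibullPDF αA β γ y) * weibullMeasure αS β γ (Ioi y)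
        = ENNReal.ofReal (cA / (cA + cS)) * ENNReal.ofReal
          ((cA + cS) * γ * (y - β) ^ (γ - 1) * exp (-((cA + cS) * (y - β) ^ γ))) := by
    intro y hy
    have := rpow_nonneg (sub_nonneg.2 hy.out.le) (γ - 1)
    rw [weibullMeasure_Ioi hαS hγ hy.out.le, weibullPDF_eq_rate_form hαA hy,
      ← ENNReal.ofReal_mul (by positivity), ← ENNReal.ofReal_mul (by positivity),
      weibull_rate_density_mul_exp (by positivity)]
  calc ∫⁻ y, weibullMeasure αS β γ (Ioi y) ∂weibullMeasure αA β γ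
      = ∫⁻ y in Ioi β,
          ENNReal.ofReal (weibullPDF αA β γ y) * weibullMeasure αS β γ (Ioi y) := by
        rw [weibullMeasure, lintegral_withDensity_eq_lintegral_mul _
          measurable_weibullPDF.ennreal_ofReal htail, restrict_Ioi_eq_restrict_Ici,
          setLIntegral_eq_of_support_subset hsupp]
        rfl
    _ = ENNReal.ofReal (cA / (cA + cS)) := by
        rw [setLIntegral_congr_fun measurableSet_Ioi hmix,
          lintegral_const_mul' _ _ ENNReal.ofReal_ne_top,
          lintegral_Ioi_weibull_rate_density (by positivity) hγ le_rfl,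
          sub_self, zero_rpow hγ.ne', mul_zero, neg_zero, exp_zero, ENNReal.ofReal_one, mul_one]
    _ = ENNReal.ofReal (αS ^ γ / (αS ^ γ + αA ^ γ)) := by
        have := rpow_pos_of_pos hαS γ
        have := rpow_pos_of_pos hαA γ
        rw [show cS = (αS ^ γ)⁻¹ from rpow_neg hαS.le γ,
          show cA = (αA ^ γ)⁻¹ from rpow_neg hαA.le γ]
        congr 1
        field_simp

end Weibull

theorem pythagorean_single_weibull_general
    {Ω : Type*} [MeasureSpace Ω]
    (αS αA β γ : ℝ) (hαS : 0 < αS) (hαA : 0 < αA) (hγ : 0 < γ)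
    (X Y : Ω → ℝ) (hX : Measurable X) (hY : Measurable Y)
    (hXd : Measure.map X ℙ =
      volume.withDensity (fun x => ENNReal.ofReal (weibullPDF αS β γ x)))
    (hYd : Measure.map Y ℙ =
      volume.withDensity (fun y => ENNReal.ofReal (weibullPDF αA β γ y)))
    (hind : IndepFun X Y ℙ) :
    ℙ {ω | X ω > Y ω} = ENNReal.ofReal (αS ^ γ / (αS ^ γ + αA ^ γ)) := by
  change Measure.map X ℙ = weibullMeasure αS β γ at hXd
  change Measure.map Y ℙ = weibullMeasure αA β γ at hYd
  have : SigmaFinite (Measure.map X ℙ) := hXd ▸ inferInstance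
  have : SigmaFinite (Measure.map Y ℙ) := hYd ▸ inferInstance
  show ℙ {ω | Y ω < X ω} = _
  rw [measure_lt_eq_lintegral_map_Ioi hX hY hind, hXd, hYd,
    lintegral_weibullMeasure_Ioi hαS hαA hγ]

theorem pythagorean_single_weibull
    {Ω : Type*} [MeasureSpace Ω] [IsProbabilityMeasure (ℙ : Measure Ω)]
    (αS αA β γ : ℝ) (hαS : 0 < αS) (hαA : 0 < αA) (hγ : 0 < γ)
    (X Y : Ω → ℝ) (hX : Measurable X) (hY : Measurable Y)
    (hXd : Measure.map X ℙ =
      volume.withDensity (fun x => ENNReal.ofReal (weibullPDF αS β γ x)))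
    (hYd : Measure.map Y ℙ =
      volume.withDensity (fun y => ENNReal.ofReal (weibullPDF αA β γ y)))
    (hind : IndepFun X Y ℙ) :
    ℙ {ω | X ω > Y ω} = ENNReal.ofReal (αS ^ γ / (αS ^ γ + αA ^ γ)) :=
  pythagorean_single_weibull_general αS αA β γ hαS hαA hγ X Y hX hY hXd hYd hind
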